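/- The base locus of the quadratic Cremona transformation r_2 of P^3 is exactly the union of the reducible conic {x_0 = 0, x_1 x_2 = 0} and the point [1:1:1:1]: all four coordinate polynomials of r_2 vanish at [x_0:x_1:x_2:x_3] if and only if either (x_0 = 0 and x_1 x_2 = 0) or x_0 = x_1 = x_2 = x_3. -/

import Mathlib

/-- The quadratic Cremona transformation `r₂`, in affine coordinates on `ℂ⁴`. -/
def r2fun (x : Fin 4 → ℂ) : Fin 4 → ℂ :=
  ![(x 1 - x 0) * (x 2 - x 0), x 1 * (x 2 - x 0), x 2 * (x 1 - x 0),
    x 1 * x 2 - x 0 * x 3]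

/-! Away from `x₀ = 0`, subtracting the first equation from the second and from the third leaves
`x₀ (x₂ - x₀) = 0` and `x₀ (x₁ - x₀) = 0`, so `x₁ = x₂ = x₀`, and the last equation becomes
`x₀ (x₀ - x₃) = 0`. On `x₀ = 0` the four equations reduce to `x₁ x₂ = 0`. -/

theorem quadratic_cremona_base_locus_iff {R : Type*} [CommRing R] [NoZeroDivisors R]
    (a b c d : R) :
    ((b - a) * (c - a) = 0 ∧ b * (c - a) = 0 ∧ c * (b - a) = 0 ∧ b * c - a * d = 0) ↔
      ((a = 0 ∧ b * c = 0) ∨ (a = b ∧ b = c ∧ c = d)) := by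
  constructor
  · rintro ⟨h₀, h₁, h₂, h₃⟩
    by_cases ha : a = 0
    · exact .inl ⟨ha, by linear_combination h₃ + d * ha⟩
    have cancel {u : R} (h : a * (u - a) = 0) : a = u :=
      (sub_eq_zero.mp ((mul_eq_zero.mp h).resolve_left ha)).symm
    have hc : a = c := cancel (by linear_combination h₁ - h₀)
    have hb : a = b := cancel (by linear_combination h₂ - h₀)
    have hd : a = d := cancel (by linear_combination -h₃ - c * hb - a * hc)
    exact .inr ⟨hb, hb ▸ hc, hc ▸ hd⟩
  · rintro (⟨rfl, h⟩ | ⟨rfl, rfl, rfl⟩)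
    · exact ⟨by linear_combination h, by linear_combination h, by linear_combination h,
        by linear_combination h⟩
    · simp

theorem stmt_9_general (x : Fin 4 → ℂ) :
    (∀ i : Fin 4, r2fun x i = 0) ↔
      ((x 0 = 0 ∧ x 1 * x 2 = 0) ∨ (x 0 = x 1 ∧ x 1 = x 2 ∧ x 2 = x 3)) := by
  simpa [Fin.forall_fin_succ, r2fun] using
    quadratic_cremona_base_locus_iff (x 0) (x 1) (x 2) (x 3)

/-- The base locus of `r₂` is exactly the union of the reducible conic
`{x₀ = 0, x₁x₂ = 0}` and the point `[1:1:1:1]`. -/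
theorem stmt_9 (x : Fin 4 → ℂ) (hx : x ≠ 0) :
    (∀ i : Fin 4, r2fun x i = 0) ↔
      ((x 0 = 0 ∧ x 1 * x 2 = 0) ∨ (x 0 = x 1 ∧ x 1 = x 2 ∧ x 2 = x 3)) :=
  stmt_9_general x
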